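/- arXiv:2006.05740 — 7 statements merged into one kernel-verified Lean document; each statement's English description precedes it below -/
import Mathlib

section
/- The minimum number of chains into which a finite family of intervals with pairwise distinct endpoints can be partitioned equals the length of the longest 'antichain-ordered' subsequence: namely, the length of the longest increasing subsequence of right endpoints when intervals are listed in order of increasing left endpoints. -/
/-!
For `i < j` the intervals `[x i, y i]` and `[x j, y j]` are nested exactly when `y j ≤ y i`, so
the chains of the family are the colour classes of colourings of the indices that separate every
increasing pair `i < j`, `y i < y j`. This is Mirsky's theorem for the poset of increasing pairs:
an increasing subsequence needs pairwise distinct colours, and colouring `i` by the length of the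
longest increasing subsequence ending at `i` separates increasing pairs and uses as many colours
as the longest increasing subsequence has terms.
-/

open Set

lemma StrictMono.finSnoc {α : Type*} [Preorder α] {k : ℕ} {σ : Fin k → α} {a : α}
    (hσ : StrictMono σ) (ha : ∀ m, σ m < a) : StrictMono (Fin.snoc σ a : Fin (k + 1) → α) := by
  intro i j hij
  rcases eq_or_ne j (Fin.last k) with rfl | hj
  · obtain ⟨i', rfl⟩ := Fin.exists_castSucc_eq.2 (Fin.ne_last_of_lt hij)
    simpa using ha i'
  · obtain ⟨j', rfl⟩ := Fin.exists_castSucc_eq.2 hj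
    obtain ⟨i', rfl⟩ := Fin.exists_castSucc_eq.2
      (Fin.ne_last_of_lt (hij.trans (Fin.castSucc_lt_last j')))
    simpa using hσ (Fin.castSucc_lt_castSucc_iff.1 hij)

section IncreasingSubsequences

variable {α : Type*} [Preorder α] {n : ℕ}

def incSubseqLengths (y : Fin n → α) : Set ℕ :=
  {k | ∃ σ : Fin k → Fin n, StrictMono σ ∧ StrictMono (y ∘ σ)}

/-- `k` counts the terms before `i`: the subsequence has `k + 1` terms. -/
def incSubseqLengthsEndingAt (y : Fin n → α) (i : Fin n) : Set ℕ :=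
  {k | ∃ σ : Fin (k + 1) → Fin n, StrictMono σ ∧ StrictMono (y ∘ σ) ∧ σ (Fin.last k) = i}

noncomputable def incSubseqHeight (y : Fin n → α) (i : Fin n) : ℕ :=
  sSup (incSubseqLengthsEndingAt y i)

variable {y : Fin n → α}

lemma le_of_mem_incSubseqLengths {k : ℕ} (hk : k ∈ incSubseqLengths y) : k ≤ n := by
  obtain ⟨σ, hσ, -⟩ := hk
  simpa using Fintype.card_le_of_injective σ hσ.injective

lemma bddAbove_incSubseqLengths : BddAbove (incSubseqLengths y) :=
  ⟨n, fun _ => le_of_mem_incSubseqLengths⟩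

lemma succ_mem_incSubseqLengths {i : Fin n} {k : ℕ} (hk : k ∈ incSubseqLengthsEndingAt y i) :
    k + 1 ∈ incSubseqLengths y :=
  let ⟨σ, hσ, hyσ, _⟩ := hk
  ⟨σ, hσ, hyσ⟩

lemma zero_mem_incSubseqLengthsEndingAt (i : Fin n) : 0 ∈ incSubseqLengthsEndingAt y i :=
  ⟨fun _ => i, Subsingleton.strictMono (α := Fin 1) _, Subsingleton.strictMono (α := Fin 1) _, rfl⟩

lemma bddAbove_incSubseqLengthsEndingAt (i : Fin n) :
    BddAbove (incSubseqLengthsEndingAt y i) :=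
  ⟨n, fun _ hk => Nat.le_of_succ_le (le_of_mem_incSubseqLengths (succ_mem_incSubseqLengths hk))⟩

lemma incSubseqHeight_mem (i : Fin n) : incSubseqHeight y i ∈ incSubseqLengthsEndingAt y i :=
  Nat.sSup_mem ⟨0, zero_mem_incSubseqLengthsEndingAt i⟩ (bddAbove_incSubseqLengthsEndingAt i)

lemma incSubseqHeight_lt_sSup (i : Fin n) :
    incSubseqHeight y i < sSup (incSubseqLengths y) :=
  Nat.lt_of_succ_le <|
    le_csSup bddAbove_incSubseqLengths (succ_mem_incSubseqLengths (incSubseqHeight_mem i))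

lemma incSubseqHeight_lt_of_lt {i j : Fin n} (hij : i < j) (hy : y i < y j) :
    incSubseqHeight y i < incSubseqHeight y j := by
  obtain ⟨σ, hσ, hyσ, hlast⟩ := incSubseqHeight_mem (y := y) i
  have hσj : ∀ m, σ m < j := fun m => by
    rw [← hlast] at hij
    exact (hσ.monotone (Fin.le_last m)).trans_lt hij
  have hyσj : ∀ m, (y ∘ σ) m < y j := fun m => by
    rw [← hlast] at hy
    exact (hyσ.monotone (Fin.le_last m)).trans_lt hy
  have hext : incSubseqHeight y i + 1 ∈ incSubseqLengthsEndingAt y j := by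
    refine ⟨Fin.snoc σ j, hσ.finSnoc hσj, ?_, Fin.snoc_last _ _⟩
    rw [Fin.comp_snoc]
    exact hyσ.finSnoc hyσj
  exact Nat.lt_of_succ_le (le_csSup (bddAbove_incSubseqLengthsEndingAt j) hext)

lemma le_of_mem_incSubseqLengths_of_separating {k c : ℕ} (hk : k ∈ incSubseqLengths y)
    {f : Fin n → Fin c} (hf : ∀ i j, i < j → y i < y j → f i ≠ f j) : k ≤ c := by
  obtain ⟨σ, hσ, hyσ⟩ := hk
  have hinj : Function.Injective (f ∘ σ) := by
    intro a b hab
    by_contra hne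
    rcases lt_or_gt_of_ne hne with h | h
    · exact hf _ _ (hσ h) (hyσ h) hab
    · exact hf _ _ (hσ h) (hyσ h) hab.symm
  simpa using Fintype.card_le_of_injective _ hinj

theorem sInf_separating_eq_sSup_incSubseqLengths (y : Fin n → α) :
    sInf {c : ℕ | ∃ f : Fin n → Fin c, ∀ i j, i < j → y i < y j → f i ≠ f j}
      = sSup (incSubseqLengths y) := by
  have hmem : sSup (incSubseqLengths y) ∈
      {c : ℕ | ∃ f : Fin n → Fin c, ∀ i j, i < j → y i < y j → f i ≠ f j} :=
    ⟨fun i => ⟨incSubseqHeight y i, incSubseqHeight_lt_sSup i⟩, fun _ _ hij hy h =>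
      (incSubseqHeight_lt_of_lt hij hy).ne (Fin.val_eq_of_eq h)⟩
  refine le_antisymm (Nat.sInf_le hmem) ?_
  refine csSup_le ⟨0, ⟨Fin.elim0, fun a => a.elim0, fun a => a.elim0⟩⟩ fun k hk => ?_
  exact le_csInf ⟨_, hmem⟩ fun c ⟨f, hf⟩ => le_of_mem_incSubseqLengths_of_separating hk hf

end IncreasingSubsequences

section Intervals

variable {α : Type*} [LinearOrder α]

lemma Icc_nested_iff_of_lt {a b c d : α} (hab : a ≤ b) (hcd : c ≤ d) (hac : a < c) :
    (Icc a b ⊆ Icc c d ∨ Icc c d ⊆ Icc a b) ↔ d ≤ b := by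
  rw [Icc_subset_Icc_iff hab, Icc_subset_Icc_iff hcd]
  constructor
  · rintro (⟨hca, -⟩ | ⟨-, hdb⟩)
    exacts [absurd hca hac.not_ge, hdb]
  · exact fun hdb => Or.inr ⟨hac.le, hdb⟩

lemma Icc_nested_of_eq_iff_separating {n : ℕ} {β : Type*} {x y : Fin n → α}
    (hxy : ∀ j, x j ≤ y j) (hx : StrictMono x) (f : Fin n → β) :
    (∀ i j, f i = f j → Icc (x i) (y i) ⊆ Icc (x j) (y j) ∨ Icc (x j) (y j) ⊆ Icc (x i) (y i)) ↔
      ∀ i j, i < j → y i < y j → f i ≠ f j := by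
  have hnested : ∀ {i j}, i < j →
      (Icc (x i) (y i) ⊆ Icc (x j) (y j) ∨ Icc (x j) (y j) ⊆ Icc (x i) (y i) ↔ ¬ y i < y j) :=
    fun hij => (Icc_nested_iff_of_lt (hxy _) (hxy _) (hx hij)).trans not_lt.symm
  constructor
  · exact fun h i j hij hy hf => (hnested hij).1 (h i j hf) hy
  · intro h i j hf
    rcases lt_trichotomy i j with hij | rfl | hji
    · exact (hnested hij).2 fun hy => h i j hij hy hf
    · exact Or.inl subset_rfl
    · exact ((hnested hji).2 fun hy => h j i hji hy hf.symm).symm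

end Intervals

theorem stmt_4_general (n : ℕ) (x y : Fin n → ℝ) (hxy : ∀ j, x j < y j)
    (hsort : StrictMono x) :
    sInf {c : ℕ | ∃ f : Fin n → Fin c, ∀ i j : Fin n, f i = f j →
        Set.Icc (x i) (y i) ⊆ Set.Icc (x j) (y j) ∨
          Set.Icc (x j) (y j) ⊆ Set.Icc (x i) (y i)}
      = sSup {k : ℕ | ∃ σ : Fin k → Fin n, StrictMono σ ∧ StrictMono (y ∘ σ)} := by
  simp only [Icc_nested_of_eq_iff_separating (fun j => (hxy j).le) hsort]
  exact sInf_separating_eq_sSup_incSubseqLengths y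

/-- The minimum number of chains into which a family of intervals with pairwise distinct
endpoints (listed in order of increasing left endpoints) can be partitioned equals the
length of the longest increasing subsequence of right endpoints. -/
theorem stmt_4 (n : ℕ) (x y : Fin n → ℝ) (hxy : ∀ j, x j < y j)
    (hdist : Function.Injective (Sum.elim x y)) (hsort : StrictMono x) :
    sInf {c : ℕ | ∃ f : Fin n → Fin c, ∀ i j : Fin n, f i = f j →
        Set.Icc (x i) (y i) ⊆ Set.Icc (x j) (y j) ∨
          Set.Icc (x j) (y j) ⊆ Set.Icc (x i) (y i)}
      = sSup {k : ℕ | ∃ σ : Fin k → Fin n, StrictMono σ ∧ StrictMono (y ∘ σ)} :=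
  stmt_4_general n x y hxy hsort
end

section
/- Any finite family of n intervals on the real line admits a proper coloring of its interval graph (intervals intersecting get different colors) using exactly ω colors, where ω is the maximum, over all real t, of the number of intervals containing t. -/
open Finset

noncomputable def greedy {n ω : ℕ} (adj : Fin n → Fin n → Prop) [DecidableRel adj]
    (hω : 0 < ω) : Fin n → Fin ω
  | k =>
    let F : Finset (Fin ω) :=
      ((Finset.univ.filter (fun j : Fin n => j < k ∧ adj j k)).attach.image
        (fun j => greedy adj hω j.1))
    if h : (Fᶜ).Nonempty then Fᶜ.min' h else ⟨0, hω⟩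
  termination_by k => (k : ℕ)
  decreasing_by exact (Finset.mem_filter.mp j.2).2.1

lemma greedy_proper {n ω : ℕ} (adj : Fin n → Fin n → Prop) [DecidableRel adj]
    (hω : 0 < ω)
    (hc : ∀ k : Fin n, (Finset.univ.filter (fun j => j < k ∧ adj j k)).card < ω)
    {j k : Fin n} (hjk : j < k) (ha : adj j k) :
    greedy adj hω j ≠ greedy adj hω k := by
  set F : Finset (Fin ω) :=
      ((Finset.univ.filter (fun j : Fin n => j < k ∧ adj j k)).attach.image
        (fun j => greedy adj hω j.1)) with hFdef
  have hF : F.card < ω :=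
    lt_of_le_of_lt (le_trans Finset.card_image_le Finset.card_attach.le) (hc k)
  have hne : (Fᶜ).Nonempty := by
    rw [← Finset.card_pos, Finset.card_compl]
    simp only [Fintype.card_fin]
    omega
  have hkval : greedy adj hω k = (Fᶜ).min' hne := by
    conv_lhs => rw [greedy]
    rw [← hFdef]
    exact dif_pos hne
  intro heq
  have hmem : greedy adj hω j ∈ F := by
    rw [hFdef]
    exact Finset.mem_image.mpr
      ⟨⟨j, Finset.mem_filter.mpr ⟨Finset.mem_univ _, hjk, ha⟩⟩, Finset.mem_attach _ _, rfl⟩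
  have hmin := Finset.min'_mem (Fᶜ) hne
  rw [← hkval, ← heq] at hmin
  exact (Finset.mem_compl.mp hmin) hmem

/-- Any finite family of n intervals admits a proper coloring of its interval graph
using exactly ω colors, where ω is the maximum over all real t of the number of
intervals containing t. -/
theorem stmt_5 (n : ℕ) (x y : Fin n → ℝ) (hxy : ∀ i, x i ≤ y i) (ω : ℕ)
    (hω : IsGreatest {m : ℕ | ∃ t : ℝ,
        m = (Finset.univ.filter (fun i : Fin n => x i ≤ t ∧ t ≤ y i)).card} ω) :
    ∃ col : Fin n → Fin ω, Function.Surjective col ∧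
      ∀ i j : Fin n, i ≠ j →
        (Set.Icc (x i) (y i) ∩ Set.Icc (x j) (y j)).Nonempty → col i ≠ col j := by
  classical
  rcases Nat.eq_zero_or_pos n with hn | hn
  · subst hn
    have hω0 : ω = 0 := by
      obtain ⟨t, ht⟩ := hω.1
      simpa using ht
    refine ⟨fun i => i.elim0, ?_, fun i => i.elim0⟩
    intro b
    exact absurd b.isLt (by omega)
  · -- ω ≥ 1
    have hω0 : 0 < ω := by
      have hmem : (⟨0, hn⟩ : Fin n) ∈ Finset.univ.filter
          (fun i : Fin n => x i ≤ x ⟨0, hn⟩ ∧ x ⟨0, hn⟩ ≤ y i) :=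
        Finset.mem_filter.mpr ⟨Finset.mem_univ _, le_refl _, hxy _⟩
      have hpos := Finset.card_pos.mpr ⟨_, hmem⟩
      have hub := hω.2 ⟨x ⟨0, hn⟩, rfl⟩
      omega
    set σ : Equiv.Perm (Fin n) := Tuple.sort x with hσ
    have hmono : Monotone (x ∘ σ) := Tuple.monotone_sort x
    set adj : Fin n → Fin n → Prop := fun a b =>
      (Set.Icc (x (σ a)) (y (σ a)) ∩ Set.Icc (x (σ b)) (y (σ b))).Nonempty with hadj
    have hc : ∀ k : Fin n, (Finset.univ.filter (fun j => j < k ∧ adj j k)).card < ω := by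
      intro k
      set S := Finset.univ.filter (fun j => j < k ∧ adj j k) with hS
      set t := x (σ k) with htdef
      have hsub : insert (σ k) (S.image σ) ⊆
          Finset.univ.filter (fun i : Fin n => x i ≤ t ∧ t ≤ y i) := by
        intro i hi
        rcases Finset.mem_insert.mp hi with h | h
        · subst h
          exact Finset.mem_filter.mpr ⟨Finset.mem_univ _, le_refl _, hxy _⟩
        · obtain ⟨j, hj, rfl⟩ := Finset.mem_image.mp h
          obtain ⟨-, hjk, hadjj⟩ := Finset.mem_filter.mp hj
          have hx : x (σ j) ≤ t := hmono (le_of_lt hjk)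
          obtain ⟨u, hu⟩ := hadjj
          rw [Set.Icc_inter_Icc] at hu
          have h1 : max (x (σ j)) (x (σ k)) ≤ u := hu.1
          have h2 : u ≤ min (y (σ j)) (y (σ k)) := hu.2
          refine Finset.mem_filter.mpr ⟨Finset.mem_univ _, hx, ?_⟩
          calc t ≤ u := le_trans (le_max_right _ _) h1
            _ ≤ y (σ j) := le_trans h2 (min_le_left _ _)
      have hnotmem : σ k ∉ S.image σ := by
        intro h
        obtain ⟨j, hj, hjeq⟩ := Finset.mem_image.mp h
        have := σ.injective hjeq
        exact absurd ((Finset.mem_filter.mp hj).2.1) (by rw [this]; exact lt_irrefl k)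
      have hcard1 : S.card + 1 ≤
          (Finset.univ.filter (fun i : Fin n => x i ≤ t ∧ t ≤ y i)).card := by
        have h1 : (insert (σ k) (S.image σ)).card = S.card + 1 := by
          rw [Finset.card_insert_of_notMem hnotmem,
            Finset.card_image_of_injective _ σ.injective]
        rw [← h1]
        exact Finset.card_le_card hsub
      have hub := hω.2 ⟨t, rfl⟩
      omega
    set c := greedy adj hω0 with hcdef
    set col : Fin n → Fin ω := fun i => c (σ.symm i) with hcol
    have hproper : ∀ i j : Fin n, i ≠ j →
        (Set.Icc (x i) (y i) ∩ Set.Icc (x j) (y j)).Nonempty → col i ≠ col j := by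
      intro i j hij hint
      have hab : σ.symm i ≠ σ.symm j := fun h => hij (σ.symm.injective h)
      have hi' : σ (σ.symm i) = i := σ.apply_symm_apply i
      have hj' : σ (σ.symm j) = j := σ.apply_symm_apply j
      rcases lt_or_gt_of_ne hab with h | h
      · exact greedy_proper adj hω0 hc h (by rw [hadj]; simpa only [hi', hj'] using hint)
      · exact (greedy_proper adj hω0 hc h
          (by rw [hadj]; simpa only [hi', hj', Set.inter_comm] using hint)).symm
    refine ⟨col, ?_, hproper⟩
    obtain ⟨t, ht⟩ := hω.1
    set T := Finset.univ.filter (fun i : Fin n => x i ≤ t ∧ t ≤ y i) with hT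
    have hinj : Set.InjOn col T := by
      intro i hi j hj hcoleq
      by_contra hij
      obtain ⟨-, hi1, hi2⟩ := Finset.mem_filter.mp hi
      obtain ⟨-, hj1, hj2⟩ := Finset.mem_filter.mp hj
      exact hproper i j hij ⟨t, ⟨hi1, hi2⟩, ⟨hj1, hj2⟩⟩ hcoleq
    have himg : T.image col = Finset.univ := by
      apply Finset.eq_univ_of_card
      rw [Finset.card_image_of_injOn hinj, ← ht, Fintype.card_fin]
    intro b
    have hb : b ∈ T.image col := by rw [himg]; exact Finset.mem_univ b
    obtain ⟨i, _, hi⟩ := Finset.mem_image.mp hb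
    exact ⟨i, hi⟩
end

section
/- Let a family of intervals be partitioned into c chains, and split each chain into consecutive blocks of size at most h (taking h intervals at a time from the bottom). If g^h_x denotes the number of block-bottom intervals containing x and g_x the number of all intervals containing x, then for every real x: (g^h_x − c)·h ≤ g_x. -/
/-!
Within one chain the intervals containing `x` form an initial segment, since the chain is
decreasing. If the last block bottom containing `x` sits at position `q`, then at most
`q / h + 1` block bottoms contain `x`, while all `q + 1` intervals up to position `q` do.
So each chain contributes `(g^h_x - 1) * h ≤ g_x`, and summing over the `c` chains gives
the claim.
-/

open Finset

lemma card_le_div_add_one_of_forall_dvd_le {s : Finset ℕ} {h q : ℕ}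
    (hs : ∀ p ∈ s, h ∣ p ∧ p ≤ q) : #s ≤ q / h + 1 := by
  have hsub : s ⊆ (range (q / h + 1)).image (h * ·) := fun p hp => by
    obtain ⟨hdvd, hle⟩ := hs p hp
    exact mem_image.2 ⟨p / h, mem_range.2 (Nat.lt_succ_of_le (Nat.div_le_div_right hle)),
      Nat.mul_div_cancel' hdvd⟩
  calc #s ≤ #((range (q / h + 1)).image (h * ·)) := card_le_card hsub
    _ ≤ q / h + 1 := card_image_le.trans (card_range _).le

lemma card_filter_univ_sigma {ι : Type*} [Fintype ι] {κ : ι → Type*} [∀ i, Fintype (κ i)]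
    (P : (Σ i, κ i) → Prop) [DecidablePred P] :
    #(univ.filter P) = ∑ i, #(univ.filter fun k : κ i => P ⟨i, k⟩) := by
  simp only [card_filter, Fintype.sum_sigma]

lemma Nat.sum_sub_card_le_sum_sub_one {ι : Type*} (s : Finset ι) (f : ι → ℕ) :
    (∑ i ∈ s, f i) - #s ≤ ∑ i ∈ s, (f i - 1) := by
  rw [tsub_le_iff_right]
  calc ∑ i ∈ s, f i ≤ ∑ i ∈ s, (f i - 1 + 1) := sum_le_sum fun _ _ => le_tsub_add
    _ = ∑ i ∈ s, (f i - 1) + #s := by rw [sum_add_distrib, card_eq_sum_ones]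

open Classical in
lemma Antitone.card_blockBottoms_sub_one_mul_le {α : Type*} {m : ℕ} {I : Fin m → Set α}
    (hI : Antitone I) (h : ℕ) (x : α) :
    (#(univ.filter fun p : Fin m => (p : ℕ) % h = 0 ∧ x ∈ I p) - 1) * h
      ≤ #(univ.filter fun p : Fin m => x ∈ I p) := by
  set B := univ.filter fun p : Fin m => (p : ℕ) % h = 0 ∧ x ∈ I p
  rcases B.eq_empty_or_nonempty with hB | hB
  · simp [hB]
  set q := B.max' hB
  have hqx : x ∈ I q := (mem_filter.1 (B.max'_mem hB)).2.2
  have hB_card : #B ≤ (q : ℕ) / h + 1 := by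
    rw [← card_map Fin.valEmbedding]
    refine card_le_div_add_one_of_forall_dvd_le fun p hp => ?_
    obtain ⟨p, hpB, rfl⟩ := mem_map.1 hp
    exact ⟨Nat.dvd_of_mod_eq_zero (mem_filter.1 hpB).2.1, B.le_max' p hpB⟩
  have hS_card : (q : ℕ) + 1 ≤ #(univ.filter fun p : Fin m => x ∈ I p) := by
    rw [← Fin.card_Iic]
    exact card_le_card fun p hp => mem_filter.2 ⟨mem_univ p, hI (mem_Iic.1 hp) hqx⟩
  calc (#B - 1) * h ≤ (q : ℕ) / h * h := Nat.mul_le_mul_right h (tsub_le_iff_right.2 hB_card)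
    _ ≤ q := Nat.div_mul_le_self _ _
    _ ≤ _ := (Nat.le_succ _).trans hS_card

open Classical in
theorem stmt_7_general (c h : ℕ) (m : Fin c → ℕ)
    (I : (k : Fin c) → Fin (m k) → Set ℝ)
    (hchain : ∀ k : Fin c, ∀ p q : Fin (m k), p ≤ q → I k q ⊆ I k p) (x : ℝ) :
    ((Finset.univ.filter
        (fun kp : Σ k : Fin c, Fin (m k) => (kp.2 : ℕ) % h = 0 ∧ x ∈ I kp.1 kp.2)).card
      - c) * h
      ≤ (Finset.univ.filter
          (fun kp : Σ k : Fin c, Fin (m k) => x ∈ I kp.1 kp.2)).card := by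
  rw [card_filter_univ_sigma, card_filter_univ_sigma]
  set bottoms := fun k : Fin c => #(univ.filter fun p : Fin (m k) => (p : ℕ) % h = 0 ∧ x ∈ I k p)
  calc (∑ k, bottoms k - c) * h ≤ (∑ k, (bottoms k - 1)) * h := by
        gcongr
        simpa using Nat.sum_sub_card_le_sum_sub_one univ bottoms
    _ = ∑ k, (bottoms k - 1) * h := sum_mul ..
    _ ≤ _ := sum_le_sum fun k _ => Antitone.card_blockBottoms_sub_one_mul_le (hchain k) h x

open Classical in
/-- A family of intervals partitioned into c chains, each chain split into consecutive
blocks of size at most h from the bottom (block bottoms sit at positions divisible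
by h).  If g^h_x is the number of block bottoms containing x and g_x the number of
all intervals containing x, then (g^h_x - c) * h ≤ g_x. -/
theorem stmt_7 (c h : ℕ) (hh : 0 < h) (m : Fin c → ℕ)
    (I : (k : Fin c) → Fin (m k) → Set ℝ)
    (hchain : ∀ k : Fin c, ∀ p q : Fin (m k), p ≤ q → I k q ⊆ I k p) (x : ℝ) :
    ((Finset.univ.filter
        (fun kp : Σ k : Fin c, Fin (m k) => (kp.2 : ℕ) % h = 0 ∧ x ∈ I kp.1 kp.2)).card
      - c) * h
      ≤ (Finset.univ.filter
          (fun kp : Σ k : Fin c, Fin (m k) => x ∈ I kp.1 kp.2)).card :=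
  stmt_7_general c h m I hchain x
end

section
/- Suppose a family of n intervals is partitioned into c chains, each chain is split into blocks of at most h consecutive intervals, and the block bottoms are properly colored as an interval graph with χ' colors where χ' equals the maximum number of block bottoms containing any point. Then χ' ≤ ω/h + c, where ω is the maximum number of intervals of the whole family containing any single point. -/
/-!
Fix a point `x` attaining `χ'`. In each chain the intervals containing `x` form an initial
segment (the chains are nested), say of length `N`; the block bottoms containing `x` are then
the multiples of `h` below `N`, of which there are at most `N / h + 1`. Summing over the `c`
chains, and bounding the sum of the `N`'s by `ω`, gives `h χ' ≤ ω + h c`.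
-/

open Finset

theorem Nat.mul_card_filter_dvd_range_le (h N : ℕ) : h * #{e ∈ range N | h ∣ e} ≤ N + h := by
  rcases h.eq_zero_or_pos with rfl | hpos
  · simp
  have hsub : {e ∈ range N | h ∣ e} ⊆ (range (N / h + 1)).image (h * ·) := by
    intro e he
    obtain ⟨heN, j, rfl⟩ := mem_filter.1 he
    refine mem_image.2 ⟨j, mem_range.2 ?_, rfl⟩
    exact Nat.lt_succ_of_le ((Nat.le_div_iff_mul_le hpos).2 (by linarith [mem_range.1 heN]))
  calc h * #{e ∈ range N | h ∣ e} ≤ h * (N / h + 1) := by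
        gcongr
        exact (card_le_card hsub).trans (Finset.card_image_le.trans (card_range _).le)
    _ ≤ N + h := by rw [mul_add, mul_one]; exact Nat.add_le_add_right (Nat.mul_div_le N h) h

theorem Fin.val_lt_card_of_isLowerSet {n : ℕ} {s : Finset (Fin n)}
    (hs : IsLowerSet (s : Set (Fin n))) {p : Fin n} (hp : p ∈ s) : (p : ℕ) < #s := by
  have hIic : Finset.Iic p ⊆ s := fun q hq => hs (Finset.mem_Iic.1 hq) (mem_coe.2 hp)
  have hcard := Finset.card_le_card hIic
  rw [Fin.card_Iic] at hcard
  omega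

theorem Fin.mul_card_filter_dvd_le_of_isLowerSet {n : ℕ} (h : ℕ) {s : Finset (Fin n)}
    (hs : IsLowerSet (s : Set (Fin n))) : h * #{p ∈ s | h ∣ p.val} ≤ #s + h := by
  refine le_trans (Nat.mul_le_mul_left h ?_) (Nat.mul_card_filter_dvd_range_le h #s)
  refine card_le_card_of_injOn Fin.val (fun p hp => ?_) Fin.val_injective.injOn
  obtain ⟨hps, hdvd⟩ := mem_filter.1 hp
  exact mem_filter.2 ⟨mem_range.2 (Fin.val_lt_card_of_isLowerSet hs hps), hdvd⟩

theorem Finset.card_filter_sigma_univ {ι : Type*} {α : ι → Type*} [Fintype ι]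
    [∀ i, Fintype (α i)] (P : (i : ι) → α i → Prop) [∀ i, DecidablePred (P i)]
    [DecidablePred fun x : Σ i, α i => P x.1 x.2] :
    #{x : Σ i, α i | P x.1 x.2} = ∑ i, #{a | P i a} := by
  rw [← card_sigma]
  congr 1
  ext ⟨i, a⟩
  simp

open Classical in
theorem stmt_8_general (c h : ℕ) (hh : 0 < h) (m : Fin c → ℕ)
    (I : (k : Fin c) → Fin (m k) → Set ℝ)
    (hchain : ∀ k : Fin c, ∀ p q : Fin (m k), p ≤ q → I k q ⊆ I k p)
    (χ' ω : ℕ)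
    (hχ' : IsGreatest {g : ℕ | ∃ x : ℝ, g = (Finset.univ.filter
        (fun kp : Σ k : Fin c, Fin (m k) =>
          (kp.2 : ℕ) % h = 0 ∧ x ∈ I kp.1 kp.2)).card} χ')
    (hω : IsGreatest {g : ℕ | ∃ x : ℝ, g = (Finset.univ.filter
        (fun kp : Σ k : Fin c, Fin (m k) => x ∈ I kp.1 kp.2)).card} ω) :
    (χ' : ℝ) ≤ (ω : ℝ) / h + c := by
  obtain ⟨⟨x, hx⟩, -⟩ := hχ'
  set A : ∀ k, Finset (Fin (m k)) := fun k => {p | x ∈ I k p}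
  have hA : ∀ k, IsLowerSet (A k : Set (Fin (m k))) := fun k p q hqp hp => by
    simpa [A] using hchain k q p hqp (by simpa [A] using hp)
  have hω' : ∑ k, #(A k) ≤ ω := hω.2 ⟨x, (card_filter_sigma_univ _).symm⟩
  have hχx : χ' = ∑ k, #{p ∈ A k | h ∣ p.val} := by
    rw [hx, card_filter_sigma_univ fun k (p : Fin (m k)) => (p : ℕ) % h = 0 ∧ x ∈ I k p]
    simp only [A, filter_filter, Nat.dvd_iff_mod_eq_zero, and_comm]
  have hnat : h * χ' ≤ ω + h * c :=
    calc h * χ' = ∑ k, h * #{p ∈ A k | h ∣ p.val} := by rw [hχx, mul_sum]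
      _ ≤ ∑ k, (#(A k) + h) :=
        sum_le_sum fun k _ => Fin.mul_card_filter_dvd_le_of_isLowerSet h (hA k)
      _ = ∑ k, #(A k) + h * c := by simp [sum_add_distrib, mul_comm]
      _ ≤ ω + h * c := by omega
  have hh' : (h : ℝ) ≠ 0 := by positivity
  calc (χ' : ℝ) = h * χ' / h := by field_simp
    _ ≤ (ω + h * c) / h := by gcongr; exact_mod_cast hnat
    _ = ω / h + c := by field_simp

open Classical in
/-- A family of intervals partitioned into c chains, each chain split into blocks of
at most h consecutive intervals (block bottoms at positions divisible by h).  If the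
block bottoms are properly colored with χ' colors, χ' being the maximum number of
block bottoms containing any point, then χ' ≤ ω/h + c, where ω is the maximum number
of intervals of the whole family containing any single point. -/
theorem stmt_8 (c h : ℕ) (hh : 0 < h) (m : Fin c → ℕ)
    (I : (k : Fin c) → Fin (m k) → Set ℝ)
    (hIcc : ∀ k p, ∃ a b : ℝ, a ≤ b ∧ I k p = Set.Icc a b)
    (hchain : ∀ k : Fin c, ∀ p q : Fin (m k), p ≤ q → I k q ⊆ I k p)
    (χ' ω : ℕ)
    (hχ' : IsGreatest {g : ℕ | ∃ x : ℝ, g = (Finset.univ.filter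
        (fun kp : Σ k : Fin c, Fin (m k) =>
          (kp.2 : ℕ) % h = 0 ∧ x ∈ I kp.1 kp.2)).card} χ')
    (hω : IsGreatest {g : ℕ | ∃ x : ℝ, g = (Finset.univ.filter
        (fun kp : Σ k : Fin c, Fin (m k) => x ∈ I kp.1 kp.2)).card} ω) :
    (χ' : ℝ) ≤ (ω : ℝ) / h + c :=
  stmt_8_general c h hh m I hchain χ' ω hχ' hω
end

section
/- Assigning to each interval in a block (obtained by splitting chains into blocks of at most h inclusion-nested intervals) the color of its block bottom, where block bottoms are properly colored so that intersecting block bottoms receive different colors, yields a valid h-bounded coloring: no two overlapping intervals share a color, and at most h intervals of any one color contain any point. -/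
open Classical in

/-- Coloring every interval with the color of its block bottom (blocks containing at
most h pairwise nested intervals, block bottoms with the same color pairwise
non-intersecting, every interval contained in its block bottom) yields a valid
h-bounded coloring: overlapping intervals get distinct colors, and at most h
intervals of any one color contain any point. -/
theorem stmt_10 (n nb h : ℕ) (x y : Fin n → ℝ) (hxy : ∀ i, x i < y i)
    (blk : Fin n → Fin nb) (bot : Fin nb → Fin n) (hbot : ∀ b, blk (bot b) = b)
    (hnest : ∀ i j : Fin n, blk i = blk j →
      Set.Icc (x i) (y i) ⊆ Set.Icc (x j) (y j) ∨
        Set.Icc (x j) (y j) ⊆ Set.Icc (x i) (y i))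
    (hsize : ∀ b : Fin nb, (Finset.univ.filter (fun i : Fin n => blk i = b)).card ≤ h)
    (hsub : ∀ i : Fin n,
      Set.Icc (x i) (y i) ⊆ Set.Icc (x (bot (blk i))) (y (bot (blk i))))
    (γ : Type*) (bcol : Fin nb → γ)
    (hbcol : ∀ b b' : Fin nb, b ≠ b' → bcol b = bcol b' →
      Set.Icc (x (bot b)) (y (bot b)) ∩ Set.Icc (x (bot b')) (y (bot b')) = ∅) :
    (∀ i j : Fin n, x i < x j → x j < y i → y i < y j → bcol (blk i) ≠ bcol (blk j)) ∧
      (∀ (t : ℝ) (d : γ), (Finset.univ.filter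
        (fun i : Fin n => bcol (blk i) = d ∧ x i ≤ t ∧ t ≤ y i)).card ≤ h) := by
  constructor
  · intro i j h1 h2 h3 hc
    by_cases hb : blk i = blk j
    · rcases hnest i j hb with hs | hs
      · have := hs ⟨le_refl _, le_of_lt (hxy i)⟩
        exact absurd this.1 (not_le.2 h1)
      · have := hs ⟨le_of_lt (hxy j), le_refl _⟩
        exact absurd this.2 (not_le.2 h3)
    · have hdisj := hbcol (blk i) (blk j) hb hc
      have hx : x j ∈ Set.Icc (x (bot (blk i))) (y (bot (blk i))) ∩
          Set.Icc (x (bot (blk j))) (y (bot (blk j))) :=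
        ⟨hsub i ⟨le_of_lt h1, le_of_lt h2⟩, hsub j ⟨le_refl _, le_of_lt (hxy j)⟩⟩
      rw [hdisj] at hx
      exact hx
  · intro t d
    set S := Finset.univ.filter
      (fun i : Fin n => bcol (blk i) = d ∧ x i ≤ t ∧ t ≤ y i) with hS
    rcases S.eq_empty_or_nonempty with he | ⟨i0, hi0⟩
    · simp [he]
    · have hi0' := Finset.mem_filter.1 hi0
      have hsub' : S ⊆ Finset.univ.filter (fun i : Fin n => blk i = blk i0) := by
        intro j hj
        have hj' := Finset.mem_filter.1 hj
        refine Finset.mem_filter.2 ⟨Finset.mem_univ _, ?_⟩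
        by_contra hb
        have hdisj := hbcol (blk j) (blk i0) hb (hj'.2.1.trans hi0'.2.1.symm)
        have ht : t ∈ Set.Icc (x (bot (blk j))) (y (bot (blk j))) ∩
            Set.Icc (x (bot (blk i0))) (y (bot (blk i0))) :=
          ⟨hsub j ⟨hj'.2.2.1, hj'.2.2.2⟩, hsub i0 ⟨hi0'.2.2.1, hi0'.2.2.2⟩⟩
        rw [hdisj] at ht
        exact ht
      exact le_trans (Finset.card_le_card hsub') (hsize (blk i0))
end

section
/- If a decreasing sequence b_{i_1} > b_{i_2} > ... > b_{i_k} of right-endpoint values (listed in order of increasing associated left endpoints a_{i_1} < a_{i_2} < ...) is split at the first position where the b-value drops below the corresponding a-value, then each of the two resulting parts corresponds to a chain of intervals [min(a,b), max(a,b)]. -/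
/-- A decreasing sequence of b-values, listed in order of increasing a-values, split
into the positions with a < b and the positions with b < a: each of the two parts
forms a chain of intervals [min(a,b), max(a,b)] (a family totally ordered by
inclusion). -/
theorem stmt_11 (k : ℕ) (a b : Fin k → ℝ) (ha : StrictMono a) (hb : StrictAnti b)
    (hab : ∀ i j : Fin k, a i ≠ b j) :
    (∀ i j : Fin k, a i < b i → a j < b j →
        Set.Icc (min (a i) (b i)) (max (a i) (b i)) ⊆
          Set.Icc (min (a j) (b j)) (max (a j) (b j)) ∨
        Set.Icc (min (a j) (b j)) (max (a j) (b j)) ⊆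
          Set.Icc (min (a i) (b i)) (max (a i) (b i))) ∧
    (∀ i j : Fin k, b i < a i → b j < a j →
        Set.Icc (min (a i) (b i)) (max (a i) (b i)) ⊆
          Set.Icc (min (a j) (b j)) (max (a j) (b j)) ∨
        Set.Icc (min (a j) (b j)) (max (a j) (b j)) ⊆
          Set.Icc (min (a i) (b i)) (max (a i) (b i))) := by
  constructor
  · intro i j hi hj
    rcases le_total i j with h | h
    · right
      rw [min_eq_left hi.le, max_eq_right hi.le, min_eq_left hj.le, max_eq_right hj.le]
      exact Set.Icc_subset_Icc (ha.monotone h) (hb.antitone h)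
    · left
      rw [min_eq_left hi.le, max_eq_right hi.le, min_eq_left hj.le, max_eq_right hj.le]
      exact Set.Icc_subset_Icc (ha.monotone h) (hb.antitone h)
  · intro i j hi hj
    rcases le_total i j with h | h
    · left
      rw [min_eq_right hi.le, max_eq_left hi.le, min_eq_right hj.le, max_eq_left hj.le]
      exact Set.Icc_subset_Icc (hb.antitone h) (ha.monotone h)
    · right
      rw [min_eq_right hi.le, max_eq_left hi.le, min_eq_right hj.le, max_eq_left hj.le]
      exact Set.Icc_subset_Icc (hb.antitone h) (ha.monotone h)
end

section
/- For any family of intervals formed from n pairs (a_j,b_j) with distinct coordinates, the minimum number c of chains satisfies c ≤ 2c', where c' is the minimum number of decreasing subsequences into which the sequence of b-values (listed in order of increasing a-values) can be partitioned. -/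
/-- For intervals formed from n pairs (a_j, b_j) with distinct coordinates, listed in
order of increasing a-values, the minimum number c of chains into which the intervals
can be partitioned satisfies c ≤ 2c', where c' is the minimum number of decreasing
subsequences into which the sequence of b-values can be partitioned. -/
theorem stmt_12 (n : ℕ) (a b : Fin n → ℝ)
    (hdist : Function.Injective (Sum.elim a b)) (hsort : StrictMono a) :
    sInf {c : ℕ | ∃ f : Fin n → Fin c, ∀ i j : Fin n, f i = f j →
        Set.Icc (min (a i) (b i)) (max (a i) (b i)) ⊆
          Set.Icc (min (a j) (b j)) (max (a j) (b j)) ∨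
        Set.Icc (min (a j) (b j)) (max (a j) (b j)) ⊆
          Set.Icc (min (a i) (b i)) (max (a i) (b i))}
      ≤ 2 * sInf {c : ℕ | ∃ f : Fin n → Fin c,
          ∀ i j : Fin n, i < j → f i = f j → b j < b i} := by
  set S2 := {c : ℕ | ∃ f : Fin n → Fin c, ∀ i j : Fin n, i < j → f i = f j → b j < b i}
    with hS2def
  have hne : S2.Nonempty := ⟨n, id, fun i j hij hfij => absurd hfij hij.ne⟩
  obtain ⟨f, hf⟩ := Nat.sInf_mem hne
  have hab : ∀ i, a i ≠ b i := by
    intro i h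
    have := hdist (a₁ := Sum.inl i) (a₂ := Sum.inr i) (by simpa using h)
    simp at this
  apply Nat.sInf_le
  rcases Nat.eq_zero_or_pos n with hn | hn
  · subst hn
    exact ⟨fun i => i.elim0, fun i => i.elim0⟩
  · refine ⟨fun i => ⟨2 * (f i).1 + (if a i < b i then 0 else 1), ?_⟩, ?_⟩
    · have := (f i).2
      split_ifs <;> omega
    · have key : ∀ i j : Fin n, i < j → f i = f j →
          ((a i < b i ∧ a j < b j) ∨ (¬ a i < b i ∧ ¬ a j < b j)) →
          Set.Icc (min (a j) (b j)) (max (a j) (b j)) ⊆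
            Set.Icc (min (a i) (b i)) (max (a i) (b i)) ∨
          Set.Icc (min (a i) (b i)) (max (a i) (b i)) ⊆
            Set.Icc (min (a j) (b j)) (max (a j) (b j)) := by
        intro i j hij hfij hbr
        have hbji : b j < b i := hf i j hij hfij
        have haij : a i < a j := hsort hij
        rcases hbr with ⟨h1, h2⟩ | ⟨h1, h2⟩
        · left
          rw [min_eq_left h1.le, max_eq_right h1.le, min_eq_left h2.le, max_eq_right h2.le]
          exact Set.Icc_subset_Icc haij.le hbji.le
        · have h1' : b i < a i := lt_of_le_of_ne (not_lt.1 h1) (fun h => hab i h.symm)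
          have h2' : b j < a j := lt_of_le_of_ne (not_lt.1 h2) (fun h => hab j h.symm)
          right
          rw [min_eq_right h1'.le, max_eq_left h1'.le, min_eq_right h2'.le, max_eq_left h2'.le]
          exact Set.Icc_subset_Icc hbji.le haij.le
      intro i j hgij
      have hval : 2 * (f i).1 + (if a i < b i then 0 else 1)
          = 2 * (f j).1 + (if a j < b j then 0 else 1) := congrArg Fin.val hgij
      have hfeq : f i = f j := by
        apply Fin.ext
        split_ifs at hval <;> omega
      have hbr : (a i < b i ∧ a j < b j) ∨ (¬ a i < b i ∧ ¬ a j < b j) := by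
        split_ifs at hval with h1 h2 h3
        · exact Or.inl ⟨h1, h2⟩
        · omega
        · omega
        · exact Or.inr ⟨h1, h3⟩
      rcases lt_trichotomy i j with h | h | h
      · exact (key i j h hfeq hbr).symm
      · subst h; exact Or.inl subset_rfl
      · exact key j i h hfeq.symm (hbr.imp And.symm And.symm)
end
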